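/- For any a > 0, the Gaussian tail function satisfies Craig's formula: Q(√a) = (1/π) ∫₀^{π/2} exp(-a/(2 sin²θ)) dθ, where Q(x) = (1/√(2π)) ∫_x^∞ e^{-u²/2} du. -/

import Mathlib

open MeasureTheory Real Set

/-- The Gaussian tail function `Q(x) = (1/√(2π)) ∫_x^∞ e^{-u²/2} du`. -/
noncomputable def gaussQ (x : ℝ) : ℝ :=
  (1 / Real.sqrt (2 * π)) * ∫ u in Set.Ioi x, Real.exp (-u ^ 2 / 2)

/-!
Since `∫ e^{-v²/2} dv = √(2π)`, the number `√(2π) Q(x)` is the Gaussian integral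
`∫∫ e^{-(u²+v²)/2}` over the half-plane `u > x`. In polar coordinates `(r, θ)` the half-plane
is `r cos θ > x`, so for `cos θ > 0` the radial integral is
`∫_{x / cos θ}^∞ r e^{-r²/2} dr = exp (-x² / (2 cos² θ))`, and it vanishes otherwise.
The substitution `θ ↦ π/2 - θ` and the evenness of `cos` turn the remaining integral over
`(-π/2, π/2)` into twice the integral of `exp (-x² / (2 sin² θ))` over `(0, π/2)`.
-/

open Filter Topology

lemma integral_exp_neg_sq_div_two : ∫ v : ℝ, exp (-v ^ 2 / 2) = √(2 * π) := by
  simpa [div_eq_inv_mul, neg_div] using integral_gaussian (1 / 2)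

lemma integral_Ioi_mul_exp_neg_sq_div_two {c : ℝ} (hc : 0 ≤ c) :
    ∫ r in Ioi c, r * exp (-r ^ 2 / 2) = exp (-c ^ 2 / 2) := by
  have hderiv (r : ℝ) : HasDerivAt (fun r => -exp (-r ^ 2 / 2)) (r * exp (-r ^ 2 / 2)) r := by
    have hsq : HasDerivAt (fun r : ℝ => -r ^ 2 / 2) (-r) r := by
      simpa using ((hasDerivAt_pow 2 r).neg.div_const 2).congr_deriv (by ring)
    exact hsq.exp.neg.congr_deriv (by ring)
  have hlim : Tendsto (fun r => -exp (-r ^ 2 / 2)) atTop (𝓝 (-0)) := by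
    refine (tendsto_exp_atBot.comp ?_).neg
    exact (tendsto_neg_atTop_atBot.comp (tendsto_pow_atTop two_ne_zero)).atBot_div_const two_pos
  simpa using integral_Ioi_of_hasDerivAt_of_nonneg
    (continuous_exp.comp (by fun_prop)).neg.continuousWithinAt (fun r _ => hderiv r)
    (fun r hr => mul_nonneg (hc.trans hr.le) (exp_pos _).le) hlim

lemma integral_Ioi_ite_mul_exp_neg_sq_div_two {x : ℝ} (hx : 0 ≤ x) (c : ℝ) :
    ∫ r in Ioi 0, (if x < r * c then r * exp (-r ^ 2 / 2) else 0)
      = if 0 < c then exp (-x ^ 2 / (2 * c ^ 2)) else 0 := by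
  split_ifs with hc
  · have hxc : 0 ≤ x / c := div_nonneg hx hc.le
    have hind : (fun r => if x < r * c then r * exp (-r ^ 2 / 2) else 0)
        = (Ioi (x / c)).indicator fun r => r * exp (-r ^ 2 / 2) := by
      ext r
      simp only [indicator, mem_Ioi, div_lt_iff₀ hc]
    rw [hind, setIntegral_indicator measurableSet_Ioi, Ioi_inter_Ioi, max_eq_right hxc,
      integral_Ioi_mul_exp_neg_sq_div_two hxc, div_pow]
    congr 1
    field_simp
  · refine setIntegral_eq_zero_of_forall_eq_zero fun r hr => ?_
    have : r * c ≤ x := (mul_nonpos_of_nonneg_of_nonpos (le_of_lt hr) (not_lt.mp hc)).trans hx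
    simp [not_lt.mpr this]

lemma mem_Ioo_neg_pi_div_two_of_cos_pos {θ : ℝ} (hθ : θ ∈ Ioo (-π) π) (hcos : 0 < cos θ) :
    θ ∈ Ioo (-(π / 2)) (π / 2) := by
  by_contra h
  rcases not_and_or.mp h with h | h <;> push Not at h
  · have := cos_nonpos_of_pi_div_two_le_of_le (x := -θ) (by linarith) (by linarith [hθ.1])
    rw [cos_neg] at this
    linarith
  · have := cos_nonpos_of_pi_div_two_le_of_le h (by linarith [hθ.2])
    linarith

lemma setIntegral_Ioo_ite_cos_pos (f : ℝ → ℝ) :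
    ∫ θ in Ioo (-π) π, (if 0 < cos θ then f θ else 0) = ∫ θ in Ioo (-(π / 2)) (π / 2), f θ := by
  have hsub : Ioo (-(π / 2)) (π / 2) ⊆ Ioo (-π) π :=
    Ioo_subset_Ioo (by linarith [pi_pos]) (by linarith [pi_pos])
  rw [← inter_eq_self_of_subset_right hsub, ← setIntegral_indicator measurableSet_Ioo]
  refine setIntegral_congr_fun measurableSet_Ioo fun θ hθ => ?_
  by_cases hcos : 0 < cos θ
  · simp [hcos, mem_Ioo_neg_pi_div_two_of_cos_pos hθ hcos]
  · rw [if_neg hcos, indicator_of_notMem fun h => hcos (cos_pos_of_mem_Ioo h)]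

lemma integral_comp_cos_eq_two_mul_integral_comp_sin {E : Type*} [NormedAddCommGroup E]
    [NormedSpace ℝ E] (f : ℝ → E)
    (hf : IntervalIntegrable (fun θ => f (cos θ)) volume (-(π / 2)) (π / 2)) :
    ∫ θ in -(π / 2)..π / 2, f (cos θ) = (2 : ℝ) • ∫ θ in 0..π / 2, f (sin θ) := by
  have hpi : 0 ≤ π / 2 := by positivity
  have hleft : ∫ θ in -(π / 2)..0, f (cos θ) = ∫ θ in 0..π / 2, f (cos θ) := by
    simpa using
      (intervalIntegral.integral_comp_neg (a := 0) (b := π / 2) fun θ => f (cos θ)).symm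
  have hsin : ∫ θ in 0..π / 2, f (cos θ) = ∫ θ in 0..π / 2, f (sin θ) := by
    simpa [cos_pi_div_two_sub] using (intervalIntegral.integral_comp_sub_left (a := 0)
      (b := π / 2) (fun θ => f (cos θ)) (π / 2)).symm
  rw [← intervalIntegral.integral_add_adjacent_intervals (b := 0)
    (hf.mono_set (uIcc_subset_uIcc_left (by simp [hpi])))
    (hf.mono_set (uIcc_subset_uIcc_right (by simp [hpi]))), hleft, hsin, two_smul]

lemma smul_indicator_mul_exp_polarCoord_symm (x : ℝ) (p : ℝ × ℝ) :
    p.1 • ((Ioi x).indicator (fun u => exp (-u ^ 2 / 2)) (polarCoord.symm p).1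
      * exp (-(polarCoord.symm p).2 ^ 2 / 2))
      = {q : ℝ × ℝ | x < q.1 * cos q.2}.indicator (fun q => q.1 * exp (-q.1 ^ 2 / 2)) p := by
  have hexp : exp (-(p.1 * cos p.2) ^ 2 / 2) * exp (-(p.1 * sin p.2) ^ 2 / 2)
      = exp (-p.1 ^ 2 / 2) := by
    rw [← exp_add]
    congr 1
    linear_combination (-p.1 ^ 2 / 2) * cos_sq_add_sin_sq p.2
  by_cases h : x < p.1 * cos p.2
  · simp [indicator, h, hexp]
  · simp [indicator, h]

lemma integrableOn_polarCoord_target_indicator (x : ℝ) :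
    IntegrableOn ({q : ℝ × ℝ | x < q.1 * cos q.2}.indicator fun q => q.1 * exp (-q.1 ^ 2 / 2))
      polarCoord.target := by
  refine IntegrableOn.indicator ?_ (measurableSet_lt measurable_const (by fun_prop))
  rw [polarCoord_target, IntegrableOn, Measure.volume_eq_prod, ← Measure.prod_restrict]
  have hr : Integrable (fun r : ℝ => r * exp (-r ^ 2 / 2)) (volume.restrict (Ioi 0)) := by
    refine (integrable_mul_exp_neg_mul_sq (b := 1 / 2) (by norm_num)).integrableOn.congr_fun
      (fun r _ => ?_) measurableSet_Ioi
    ring_nf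
  have hθ : Integrable (fun _ : ℝ => (1 : ℝ)) (volume.restrict (Ioo (-π) π)) :=
    integrable_const _
  simpa using hr.mul_prod hθ

lemma integral_Ioi_exp_neg_sq_div_two_mul_sqrt_two_pi {x : ℝ} (hx : 0 ≤ x) :
    (∫ u in Ioi x, exp (-u ^ 2 / 2)) * √(2 * π)
      = ∫ θ in Ioo (-(π / 2)) (π / 2), exp (-x ^ 2 / (2 * cos θ ^ 2)) := by
  set F := {q : ℝ × ℝ | x < q.1 * cos q.2}.indicator fun q => q.1 * exp (-q.1 ^ 2 / 2)
  have hF : IntegrableOn F (Ioi 0 ×ˢ Ioo (-π) π) (volume.prod volume) := by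
    simpa [← Measure.volume_eq_prod] using integrableOn_polarCoord_target_indicator x
  calc (∫ u in Ioi x, exp (-u ^ 2 / 2)) * √(2 * π)
      = ∫ p : ℝ × ℝ, (Ioi x).indicator (fun u => exp (-u ^ 2 / 2)) p.1 * exp (-p.2 ^ 2 / 2) := by
        rw [Measure.volume_eq_prod,
          integral_prod_mul ((Ioi x).indicator fun u => exp (-u ^ 2 / 2)) fun v => exp (-v ^ 2 / 2),
          integral_indicator measurableSet_Ioi, integral_exp_neg_sq_div_two]
    _ = ∫ p in Ioi 0 ×ˢ Ioo (-π) π, F p := by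
        rw [← integral_comp_polarCoord_symm, polarCoord_target]
        simp_rw [smul_indicator_mul_exp_polarCoord_symm, F]
    _ = ∫ θ in Ioo (-π) π, ∫ r in Ioi 0, F (r, θ) := by
        rw [Measure.volume_eq_prod, setIntegral_prod _ hF, integral_integral_swap]
        rwa [Measure.prod_restrict]
    _ = ∫ θ in Ioo (-π) π, if 0 < cos θ then exp (-x ^ 2 / (2 * cos θ ^ 2)) else 0 := by
        congr 1 with θ
        exact integral_Ioi_ite_mul_exp_neg_sq_div_two hx (cos θ)
    _ = _ := setIntegral_Ioo_ite_cos_pos _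

lemma intervalIntegrable_exp_neg_div_cos_sq (x a b : ℝ) :
    IntervalIntegrable (fun θ => exp (-x ^ 2 / (2 * cos θ ^ 2))) volume a b := by
  rw [intervalIntegrable_iff]
  refine Measure.integrableOn_of_bounded (M := 1) measure_Ioc_lt_top.ne
    (Measurable.aestronglyMeasurable (by fun_prop)) (Eventually.of_forall fun θ => ?_)
  rw [norm_of_nonneg (exp_pos _).le, exp_le_one_iff]
  exact div_nonpos_of_nonpos_of_nonneg (by simpa using sq_nonneg x) (by positivity)

lemma gaussQ_eq_integral {x : ℝ} (hx : 0 ≤ x) :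
    gaussQ x = (1 / π) * ∫ θ in (0 : ℝ)..(π / 2), exp (-x ^ 2 / (2 * sin θ ^ 2)) := by
  have key : (∫ u in Ioi x, exp (-u ^ 2 / 2)) * √(2 * π)
      = 2 * ∫ θ in (0 : ℝ)..(π / 2), exp (-x ^ 2 / (2 * sin θ ^ 2)) := by
    rw [integral_Ioi_exp_neg_sq_div_two_mul_sqrt_two_pi hx, ← integral_Ioc_eq_integral_Ioo,
      ← intervalIntegral.integral_of_le (by linarith [pi_pos]),
      integral_comp_cos_eq_two_mul_integral_comp_sin (fun s => exp (-x ^ 2 / (2 * s ^ 2)))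
        (intervalIntegrable_exp_neg_div_cos_sq x _ _), smul_eq_mul]
  rw [gaussQ]
  set I := ∫ u in Ioi x, exp (-u ^ 2 / 2)
  set J := ∫ θ in (0 : ℝ)..(π / 2), exp (-x ^ 2 / (2 * sin θ ^ 2))
  have hsqrt : √(2 * π) ^ 2 = 2 * π := sq_sqrt (by positivity)
  rw [eq_div_of_mul_eq (by positivity) key]
  field_simp
  rw [hsqrt]

theorem stmt8 (a : ℝ) (ha : 0 < a) :
    gaussQ (Real.sqrt a)
      = (1 / π) * ∫ θ in (0 : ℝ)..(π / 2), Real.exp (-a / (2 * Real.sin θ ^ 2)) := by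
  rw [gaussQ_eq_integral (sqrt_nonneg a), sq_sqrt ha.le]
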